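/- For any odd positive integers w1, w2, w3, any complex number y1, and any nonnegative integer n: Σ_{k+l+m=n} (n choose k,l,m) E_{k,χ}(w1 y1) T_l(w2 d − 1, χ) T_m(w3 d − 1, χ) w1^{l+m} w2^{k+m} w3^{k+l} = (w2 w3)^n Σ_{a=0}^{w2 d − 1} Σ_{b=0}^{w3 d − 1} (−1)^{a+b} χ(a) χ(b) E_{n,χ}(w1 y1 + (w1/w2) a + (w1/w3) b). -/

import Mathlib

open Finset

/-- The formal exponential power series `e^{ct} = Σ cⁿ tⁿ/n!` in `ℂ[[t]]`. -/
noncomputable def expPS (c : ℂ) : PowerSeries ℂ :=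
  PowerSeries.mk fun n => c ^ n / n.factorial

/-- `Σ_{a=0}^{d-1} (-1)^a χ(a) e^{at}` as a formal power series. -/
noncomputable def altSum (χ : ℤ → ℂ) (d : ℕ) : PowerSeries ℂ :=
  ∑ a ∈ Finset.range d, ((-1 : ℂ) ^ a * χ (a : ℤ)) • expPS (a : ℂ)

/-- `E` is the family of generalized Euler polynomials attached to `χ` mod `d`:
`(Σ_{n≥0} E_{n,χ}(x) tⁿ/n!) · (e^{dt}+1) = 2 e^{xt} · Σ_{a=0}^{d-1} (-1)^a χ(a) e^{at}`. -/
def IsGenEuler (d : ℕ) (χ : ℤ → ℂ) (E : ℕ → ℂ → ℂ) : Prop :=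
  ∀ x : ℂ, (PowerSeries.mk fun n => E n x / n.factorial) * (expPS (d : ℂ) + 1)
    = (2 : PowerSeries ℂ) * expPS x * altSum χ d

/-- The alternating generalized power sum `T_k(n,χ) = Σ_{a=0}^{n} (-1)^a χ(a) a^k`
(with the convention `0^0 = 1`). -/
noncomputable def altPowSum (χ : ℤ → ℂ) (k n : ℕ) : ℂ :=
  ∑ a ∈ Finset.range (n + 1), (-1 : ℂ) ^ a * χ (a : ℤ) * (a : ℂ) ^ k

/-- The multinomial coefficient `(k+l+m)! / (k! l! m!)`. -/
def multinom (k l m : ℕ) : ℕ :=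
  (k + l + m).factorial / (k.factorial * l.factorial * m.factorial)

/-!
Write `F(x) = Σ E_{n,χ}(x) tⁿ/n!`. The defining identity gives
`F(x + y) (e^{dt}+1) = e^{yt} F(x) (e^{dt}+1)`, and `e^{dt}+1` is not a zero divisor, so
`F(x + y) = F(x) e^{yt}`. Summing over the shifts `y = (w₁/w₂) a + (w₁/w₃) b` with weights
`(-1)^{a+b} χ(a) χ(b)` gives `F(w₁y₁) · A · B`, where `A` and `B` are the exponential generating
functions of the alternating power sums, scaled by `w₁/w₂` and `w₁/w₃`. Both sides of the theorem
are `n! (w₂w₃)ⁿ` times the `n`-th coefficient of this identity.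
-/

noncomputable def eulerGF (E : ℕ → ℂ → ℂ) (x : ℂ) : PowerSeries ℂ :=
  PowerSeries.mk fun n => E n x / n.factorial

lemma expPS_add (u v : ℂ) : expPS (u + v) = expPS u * expPS v := by
  have h (c : ℂ) : expPS c = PowerSeries.rescale c (PowerSeries.exp ℂ) := by
    ext n
    simp [expPS, PowerSeries.coeff_rescale, PowerSeries.coeff_exp, div_eq_mul_inv]
  rw [h, h, h, PowerSeries.exp_mul_exp_eq_exp_add]

lemma expPS_add_one_ne_zero (c : ℂ) : expPS c + 1 ≠ 0 := by
  intro h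
  have := congrArg (PowerSeries.constantCoeff (R := ℂ)) h
  simp [expPS, ← PowerSeries.coeff_zero_eq_constantCoeff] at this

lemma sum_range_smul_expPS_eq_mk (χ : ℤ → ℂ) (N : ℕ) (u : ℂ) :
    ∑ a ∈ range (N + 1), ((-1 : ℂ) ^ a * χ a) • expPS (u * a)
      = PowerSeries.mk fun l => altPowSum χ l N * u ^ l / l.factorial := by
  ext l
  simp only [map_sum, PowerSeries.coeff_smul, expPS, PowerSeries.coeff_mk, smul_eq_mul,
    altPowSum, sum_mul, sum_div]
  refine sum_congr rfl fun a _ => ?_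
  ring

lemma PowerSeries.coeff_mk_mul_mk_mul_mk {R : Type*} [CommSemiring R] (f g h : ℕ → R) (n : ℕ) :
    coeff n (mk f * mk g * mk h)
      = ∑ k ∈ range (n + 1), ∑ l ∈ range (n + 1 - k), f k * g l * h (n - k - l) := by
  rw [mul_assoc, coeff_mul, Finset.Nat.sum_antidiagonal_eq_sum_range_succ_mk]
  refine sum_congr rfl fun k hk => ?_
  rw [coeff_mk, coeff_mul, Finset.Nat.sum_antidiagonal_eq_sum_range_succ_mk, mul_sum]
  dsimp only
  rw [Nat.succ_eq_add_one, show n - k + 1 = n + 1 - k by grind]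
  exact sum_congr rfl fun l _ => by simp only [coeff_mk, mul_assoc]

lemma multinom_cast (k l m : ℕ) :
    (multinom k l m : ℂ)
      = (k + l + m).factorial / ((k.factorial : ℂ) * l.factorial * m.factorial) := by
  have hdvd : k.factorial * l.factorial * m.factorial ∣ (k + l + m).factorial :=
    (mul_dvd_mul_right (Nat.factorial_mul_factorial_dvd_factorial_add k l) _).trans
      (Nat.factorial_mul_factorial_dvd_factorial_add (k + l) m)
  rw [multinom, Nat.cast_div hdvd (Nat.cast_ne_zero.2 (by positivity)), Nat.cast_mul,
    Nat.cast_mul]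

section

variable {d : ℕ} {χ : ℤ → ℂ} {E : ℕ → ℂ → ℂ}

lemma IsGenEuler.eulerGF_add (hE : IsGenEuler d χ E) (x y : ℂ) :
    eulerGF E (x + y) = eulerGF E x * expPS y := by
  refine mul_right_cancel₀ (expPS_add_one_ne_zero d) ?_
  calc eulerGF E (x + y) * (expPS d + 1) = 2 * expPS (x + y) * altSum χ d := hE (x + y)
    _ = expPS y * (2 * expPS x * altSum χ d) := by rw [expPS_add]; ring
    _ = eulerGF E x * expPS y * (expPS d + 1) := by rw [← hE x, eulerGF]; ring

lemma IsGenEuler.sum_smul_eulerGF_add (hE : IsGenEuler d χ E) {ι : Type*} (s : Finset ι)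
    (α y : ι → ℂ) (x : ℂ) :
    ∑ i ∈ s, α i • eulerGF E (x + y i) = eulerGF E x * ∑ i ∈ s, α i • expPS (y i) := by
  simp only [hE.eulerGF_add, mul_sum, mul_smul_comm]

lemma IsGenEuler.sum_sum_smul_eulerGF_add (hE : IsGenEuler d χ E) {ι κ : Type*}
    (s : Finset ι) (t : Finset κ) (α y : ι → ℂ) (β z : κ → ℂ) (x : ℂ) :
    ∑ i ∈ s, ∑ j ∈ t, (α i * β j) • eulerGF E (x + y i + z j)
      = eulerGF E x * (∑ i ∈ s, α i • expPS (y i)) * ∑ j ∈ t, β j • expPS (z j) := by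
  simp only [mul_smul, ← smul_sum, hE.sum_smul_eulerGF_add, ← smul_mul_assoc, ← sum_mul]

end

lemma multinom_mul_pow_eq {k l m n : ℕ} (hn : k + l + m = n) {w₂ w₃ : ℂ} (hw₂ : w₂ ≠ 0)
    (hw₃ : w₃ ≠ 0) (w₁ e s t : ℂ) :
    (multinom k l m : ℂ) * e * s * t * w₁ ^ (l + m) * w₂ ^ (k + m) * w₃ ^ (k + l)
      = n.factorial * (w₂ * w₃) ^ n *
          (e / k.factorial * (s * (w₁ / w₂) ^ l / l.factorial) *
            (t * (w₁ / w₃) ^ m / m.factorial)) := by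
  rw [← hn, multinom_cast, div_pow, div_pow]
  field_simp
  ring

theorem stmt_12_general (d : ℕ) (hd0 : 0 < d) (χ : ℤ → ℂ)
    (E : ℕ → ℂ → ℂ) (hE : IsGenEuler d χ E)
    (w1 w2 w3 : ℕ) (hw2 : 0 < w2) (hw3 : 0 < w3)
    (y1 : ℂ) (n : ℕ) :
    (∑ k ∈ range (n + 1), ∑ l ∈ range (n + 1 - k),
      (multinom k l (n - k - l) : ℂ) * E k ((w1 : ℂ) * y1) *
        altPowSum χ l (w2 * d - 1) * altPowSum χ (n - k - l) (w3 * d - 1) *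
        (w1 : ℂ) ^ (l + (n - k - l)) * (w2 : ℂ) ^ (k + (n - k - l)) * (w3 : ℂ) ^ (k + l))
    = ((w2 : ℂ) * w3) ^ n * ∑ a ∈ range (w2 * d), ∑ b ∈ range (w3 * d),
        (-1 : ℂ) ^ (a + b) * χ (a : ℤ) * χ (b : ℤ) *
          E n ((w1 : ℂ) * y1 + (w1 : ℂ) / (w2 : ℂ) * (a : ℂ) +
            (w1 : ℂ) / (w3 : ℂ) * (b : ℂ)) := by
  have hw2c : (w2 : ℂ) ≠ 0 := Nat.cast_ne_zero.2 hw2.ne'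
  have hw3c : (w3 : ℂ) ≠ 0 := Nat.cast_ne_zero.2 hw3.ne'
  obtain ⟨M, hM⟩ : ∃ M, w2 * d = M + 1 := Nat.exists_eq_add_one.2 (by positivity)
  obtain ⟨N, hN⟩ : ∃ N, w3 * d = N + 1 := Nat.exists_eq_add_one.2 (by positivity)
  have hseries := hE.sum_sum_smul_eulerGF_add (range (M + 1)) (range (N + 1))
    (fun a : ℕ => (-1 : ℂ) ^ a * χ a) (fun a : ℕ => (w1 : ℂ) / w2 * a)
    (fun b : ℕ => (-1 : ℂ) ^ b * χ b) (fun b : ℕ => (w1 : ℂ) / w3 * b) (w1 * y1)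
  rw [sum_range_smul_expPS_eq_mk, sum_range_smul_expPS_eq_mk] at hseries
  rw [hM, hN, Nat.add_sub_cancel, Nat.add_sub_cancel]
  calc _ = (n.factorial : ℂ) * ((w2 : ℂ) * w3) ^ n * PowerSeries.coeff n (eulerGF E (w1 * y1) *
        (PowerSeries.mk fun l => altPowSum χ l M * ((w1 : ℂ) / w2) ^ l / l.factorial) *
        (PowerSeries.mk fun l => altPowSum χ l N * ((w1 : ℂ) / w3) ^ l / l.factorial)) := by
        rw [eulerGF, PowerSeries.coeff_mk_mul_mk_mul_mk, mul_sum]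
        refine sum_congr rfl fun k hk => ?_
        rw [mul_sum]
        exact sum_congr rfl fun l hl =>
          multinom_mul_pow_eq (by grind) hw2c hw3c _ _ _ _
    _ = _ := by
        rw [← hseries]
        simp only [map_sum, PowerSeries.coeff_smul, eulerGF, PowerSeries.coeff_mk, smul_eq_mul,
          mul_sum]
        refine sum_congr rfl fun a _ => sum_congr rfl fun b _ => ?_
        generalize E n _ = e
        have : (n.factorial : ℂ) ≠ 0 := Nat.cast_ne_zero.2 n.factorial_ne_zero
        field_simp
        ring

/-- Identity between the two expressions (a-2(1)) and (a-2(3)) for `I(Λ²₃²)`. -/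
theorem stmt_12 (d : ℕ) (hd : Odd d) (hd0 : 0 < d) (χ : ℤ → ℂ)
    (hper : ∀ a : ℤ, χ (a + d) = χ a)
    (hmul : ∀ a b : ℤ, χ (a * b) = χ a * χ b) (hone : χ 1 = 1)
    (hvan : ∀ a : ℤ, 1 < Int.gcd a d → χ a = 0)
    (E : ℕ → ℂ → ℂ) (hE : IsGenEuler d χ E)
    (w1 w2 w3 : ℕ) (hw1 : 0 < w1) (hw2 : 0 < w2) (hw3 : 0 < w3)
    (hw1o : Odd w1) (hw2o : Odd w2) (hw3o : Odd w3)
    (y1 : ℂ) (n : ℕ) :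
    (∑ k ∈ range (n + 1), ∑ l ∈ range (n + 1 - k),
      (multinom k l (n - k - l) : ℂ) * E k ((w1 : ℂ) * y1) *
        altPowSum χ l (w2 * d - 1) * altPowSum χ (n - k - l) (w3 * d - 1) *
        (w1 : ℂ) ^ (l + (n - k - l)) * (w2 : ℂ) ^ (k + (n - k - l)) * (w3 : ℂ) ^ (k + l))
    = ((w2 : ℂ) * w3) ^ n * ∑ a ∈ range (w2 * d), ∑ b ∈ range (w3 * d),
        (-1 : ℂ) ^ (a + b) * χ (a : ℤ) * χ (b : ℤ) *
          E n ((w1 : ℂ) * y1 + (w1 : ℂ) / (w2 : ℂ) * (a : ℂ) +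
            (w1 : ℂ) / (w3 : ℂ) * (b : ℂ)) :=
  stmt_12_general d hd0 χ E hE w1 w2 w3 hw2 hw3 y1 n
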